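/- arXiv:1805.11229 — 3 statements merged into one kernel-verified Lean document; each statement's English description precedes it below -/
import Mathlib

section
/- Let (G₁,δ₁), (G₂,δ₂), (G₃,δ₃) be metric monoids and 0 < ε₁, ε₂ ≤ √2/2. If (ς₁,κ₁) is a (1/ε₁)-local ε₁-almost isometric isomorphism from (G₁,δ₁) to (G₂,δ₂), and (ς₂,κ₂) is a (1/ε₂)-local ε₂-almost isometric isomorphism from (G₂,δ₂) to (G₃,δ₃), then (ς₂∘ς₁, κ₁∘κ₂) is a (1/(ε₁+ε₂))-local (ε₁+ε₂)-almost isometric isomorphism from (G₁,δ₁) to (G₃,δ₃). -/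
/-- A metric on a monoid is left invariant when left translations are isometric. -/
def LeftInvariant (G : Type*) [Monoid G] [MetricSpace G] : Prop :=
  ∀ h g g' : G, dist (h * g) (h * g') = dist g g'

/-- An `r`-local `ε`-almost isometric isomorphism between two metric monoids. -/
def AlmostIsoIso {G₁ G₂ : Type*} [Monoid G₁] [MetricSpace G₁]
    [Monoid G₂] [MetricSpace G₂] (ς₁ : G₁ → G₂) (ς₂ : G₂ → G₁) (ε r : ℝ) : Prop :=
  ς₁ 1 = 1 ∧ ς₂ 1 = 1 ∧
  (∀ g ∈ Metric.closedBall (1 : G₁) r, ∀ g' ∈ Metric.closedBall (1 : G₁) r,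
    ∀ h ∈ Metric.closedBall (1 : G₂) r,
      |dist (ς₁ g * ς₁ g') h - dist (g * g') (ς₂ h)| ≤ ε) ∧
  (∀ g ∈ Metric.closedBall (1 : G₂) r, ∀ g' ∈ Metric.closedBall (1 : G₂) r,
    ∀ h ∈ Metric.closedBall (1 : G₁) r,
      |dist (ς₂ g * ς₂ g') h - dist (g * g') (ς₁ h)| ≤ ε)

theorem almostIsoIso_comp {G₁ G₂ G₃ : Type*}
    [Monoid G₁] [MetricSpace G₁] [Monoid G₂] [MetricSpace G₂] [Monoid G₃] [MetricSpace G₃]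
    (hinv₁ : LeftInvariant G₁) (hinv₂ : LeftInvariant G₂) (hinv₃ : LeftInvariant G₃)
    (hcont₁ : Continuous fun p : G₁ × G₁ => p.1 * p.2)
    (hcont₂ : Continuous fun p : G₂ × G₂ => p.1 * p.2)
    (hcont₃ : Continuous fun p : G₃ × G₃ => p.1 * p.2)
    (ε₁ ε₂ : ℝ) (hε₁ : 0 < ε₁) (hε₁' : ε₁ ≤ Real.sqrt 2 / 2)
    (hε₂ : 0 < ε₂) (hε₂' : ε₂ ≤ Real.sqrt 2 / 2)
    (ς₁ : G₁ → G₂) (κ₁ : G₂ → G₁) (ς₂ : G₂ → G₃) (κ₂ : G₃ → G₂)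
    (h₁ : AlmostIsoIso ς₁ κ₁ ε₁ (1 / ε₁)) (h₂ : AlmostIsoIso ς₂ κ₂ ε₂ (1 / ε₂)) :
    AlmostIsoIso (ς₂ ∘ ς₁) (κ₁ ∘ κ₂) (ε₁ + ε₂) (1 / (ε₁ + ε₂)) := by
  obtain ⟨hς₁, hκ₁, hA₁, hB₁⟩ := h₁
  obtain ⟨hς₂, hκ₂, hA₂, hB₂⟩ := h₂
  have hs2 : Real.sqrt 2 * Real.sqrt 2 = 2 := Real.mul_self_sqrt (by norm_num)
  have hs2n : (0:ℝ) ≤ Real.sqrt 2 := Real.sqrt_nonneg 2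
  have hsum : 0 < ε₁ + ε₂ := by linarith
  have hmul₁ : ε₁ * (ε₁ + ε₂) ≤ 1 := by nlinarith
  have hmul₂ : ε₂ * (ε₁ + ε₂) ≤ 1 := by nlinarith
  -- key inequalities
  have key₁ : ε₁ + 1 / (ε₁ + ε₂) ≤ 1 / ε₂ := by
    rw [add_comm, div_add' _ _ _ hsum.ne', div_le_div_iff₀ hsum hε₂]
    nlinarith
  have key₂ : ε₂ + 1 / (ε₁ + ε₂) ≤ 1 / ε₁ := by
    rw [add_comm, div_add' _ _ _ hsum.ne', div_le_div_iff₀ hsum hε₁]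
    nlinarith
  have hle₁ : 1 / (ε₁ + ε₂) ≤ 1 / ε₁ := by
    apply one_div_le_one_div_of_le hε₁; linarith
  have hle₂ : 1 / (ε₁ + ε₂) ≤ 1 / ε₂ := by
    apply one_div_le_one_div_of_le hε₂; linarith
  have one₁ : ∀ r : ℝ, 0 ≤ r → (1 : G₁) ∈ Metric.closedBall (1 : G₁) r := by
    intro r hr; simpa [Metric.mem_closedBall] using hr
  have one₂ : ∀ r : ℝ, 0 ≤ r → (1 : G₂) ∈ Metric.closedBall (1 : G₂) r := by
    intro r hr; simpa [Metric.mem_closedBall] using hr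
  have one₃ : ∀ r : ℝ, 0 ≤ r → (1 : G₃) ∈ Metric.closedBall (1 : G₃) r := by
    intro r hr; simpa [Metric.mem_closedBall] using hr
  have hr₁ : (0:ℝ) ≤ 1 / ε₁ := by positivity
  have hr₂ : (0:ℝ) ≤ 1 / ε₂ := by positivity
  -- ς₁ maps B(1/(ε₁+ε₂)) into B(1/ε₂)
  have hς₁near : ∀ g ∈ Metric.closedBall (1 : G₁) (1 / (ε₁ + ε₂)),
      ς₁ g ∈ Metric.closedBall (1 : G₂) (1 / ε₂) := by
    intro g hg
    have hg' : g ∈ Metric.closedBall (1 : G₁) (1 / ε₁) :=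
      Metric.closedBall_subset_closedBall hle₁ hg
    have := hA₁ g hg' 1 (one₁ _ hr₁) 1 (one₂ _ hr₁)
    rw [hς₁, hκ₁, mul_one, mul_one] at this
    rw [Metric.mem_closedBall] at hg ⊢
    have := abs_le.mp this
    linarith [this.2]
  -- κ₂ maps B(1/(ε₁+ε₂)) into B(1/ε₁)
  have hκ₂near : ∀ h ∈ Metric.closedBall (1 : G₃) (1 / (ε₁ + ε₂)),
      κ₂ h ∈ Metric.closedBall (1 : G₂) (1 / ε₁) := by
    intro h hh
    have hh' : h ∈ Metric.closedBall (1 : G₃) (1 / ε₂) :=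
      Metric.closedBall_subset_closedBall hle₂ hh
    have := hB₂ h hh' 1 (one₃ _ hr₂) 1 (one₂ _ hr₂)
    rw [hκ₂, hς₂, mul_one, mul_one] at this
    rw [Metric.mem_closedBall] at hh ⊢
    have := abs_le.mp this
    linarith [this.2]
  refine ⟨by simp [Function.comp, hς₁, hς₂], by simp [Function.comp, hκ₁, hκ₂], ?_, ?_⟩
  · intro g hg g' hg' h hh
    have t₂ := hA₂ (ς₁ g) (hς₁near g hg) (ς₁ g') (hς₁near g' hg') h
      (Metric.closedBall_subset_closedBall hle₂ hh)
    have t₁ := hA₁ g (Metric.closedBall_subset_closedBall hle₁ hg) g'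
      (Metric.closedBall_subset_closedBall hle₁ hg') (κ₂ h) (hκ₂near h hh)
    simp only [Function.comp_apply]
    have h2 := abs_le.mp t₂
    have h1 := abs_le.mp t₁
    rw [abs_le]
    constructor <;> linarith [h1.1, h1.2, h2.1, h2.2]
  · intro g hg g' hg' h hh
    have t₂ := hB₂ g (Metric.closedBall_subset_closedBall hle₂ hg) g'
      (Metric.closedBall_subset_closedBall hle₂ hg') (ς₁ h) (hς₁near h hh)
    have t₁ := hB₁ (κ₂ g) (hκ₂near g hg) (κ₂ g') (hκ₂near g' hg') h
      (Metric.closedBall_subset_closedBall hle₁ hh)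
    simp only [Function.comp_apply]
    have h2 := abs_le.mp t₂
    have h1 := abs_le.mp t₁
    rw [abs_le]
    constructor <;> linarith [h1.1, h1.2, h2.1, h2.2]
end

section
/- If two proper metric monoids (G,δ_G) and (H,δ_H) satisfy Υ((G,δ_G),(H,δ_H)) = 0, then there exists an isometric monoid isomorphism from (G,δ_G) onto (H,δ_H). -/
open Filter Metric Topology

/-- The Gromov-Hausdorff monoid distance between two metric monoids. -/
noncomputable def Upsilon (G H : Type*) [Monoid G] [MetricSpace G]
    [Monoid H] [MetricSpace H] : ℝ :=
  min (Real.sqrt 2 / 2)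
    (sInf {ε : ℝ | 0 < ε ∧ ∃ ς : G → H, ∃ κ : H → G, AlmostIsoIso ς κ ε (1 / ε)})

section Aux
variable {G H : Type*} [Monoid G] [MetricSpace G] [Monoid H] [MetricSpace H]
  {ς : G → H} {κ : H → G} {ε : ℝ}

theorem aii_symm {r : ℝ} (h : AlmostIsoIso ς κ ε r) : AlmostIsoIso κ ς ε r :=
  ⟨h.2.1, h.1, h.2.2.2, h.2.2.1⟩

theorem aii_norm (hε : 0 < ε) (ha : AlmostIsoIso ς κ ε (1/ε)) {x : G}
    (hx : dist x 1 ≤ 1/ε) : dist (ς x) 1 ≤ dist x 1 + ε := by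
  have h1 : (1 : G) ∈ Metric.closedBall (1 : G) (1/ε) := by
    simp [hε.le]
  have h1' : (1 : H) ∈ Metric.closedBall (1 : H) (1/ε) := by
    simp [hε.le]
  have := ha.2.2.1 x (Metric.mem_closedBall.2 hx) 1 h1 1 h1'
  rw [ha.1, ha.2.1, mul_one, mul_one] at this
  have := abs_le.1 this
  linarith [this.1, this.2]

theorem aii_ret (hε : 0 < ε) (ha : AlmostIsoIso ς κ ε (1/ε)) {y : G}
    (hy : dist y 1 + ε ≤ 1/ε) : dist y (κ (ς y)) ≤ ε := by
  have hy' : dist y 1 ≤ 1/ε := by linarith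
  have h1 : (1 : G) ∈ Metric.closedBall (1 : G) (1/ε) := by
    simp [hε.le]
  have hςy : (ς y) ∈ Metric.closedBall (1 : H) (1/ε) := by
    rw [Metric.mem_closedBall]
    linarith [aii_norm hε ha hy']
  have := ha.2.2.1 y (Metric.mem_closedBall.2 hy') 1 h1 (ς y) hςy
  rw [ha.1, mul_one, mul_one, dist_self] at this
  have := abs_le.1 this
  linarith [this.1]

theorem aii_dist (hε : 0 < ε) (ha : AlmostIsoIso ς κ ε (1/ε)) {x y : G}
    (hx : dist x 1 ≤ 1/ε) (hy : dist y 1 + ε ≤ 1/ε) :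
    |dist (ς x) (ς y) - dist x y| ≤ 2*ε := by
  have hy' : dist y 1 ≤ 1/ε := by linarith
  have h1 : (1 : G) ∈ Metric.closedBall (1 : G) (1/ε) := by
    simp [hε.le]
  have hςy : (ς y) ∈ Metric.closedBall (1 : H) (1/ε) := by
    rw [Metric.mem_closedBall]
    linarith [aii_norm hε ha hy']
  have h2 := ha.2.2.1 x (Metric.mem_closedBall.2 hx) 1 h1 (ς y) hςy
  rw [ha.1, mul_one, mul_one] at h2
  have h3 : |dist x (κ (ς y)) - dist x y| ≤ ε := by
    have h4 := aii_ret hε ha hy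
    calc |dist x (κ (ς y)) - dist x y| = |dist (κ (ς y)) x - dist y x| := by
          rw [dist_comm x, dist_comm x]
      _ ≤ dist (κ (ς y)) y := abs_dist_sub_le _ _ _
      _ ≤ ε := by rw [dist_comm]; exact h4
  have h2' := abs_le.1 h2
  have h3' := abs_le.1 h3
  rw [abs_le]
  constructor <;> linarith [h2'.1, h2'.2, h3'.1, h3'.2]

theorem aii_mul (hε : 0 < ε) (ha : AlmostIsoIso ς κ ε (1/ε)) {x y : G}
    (hx : dist x 1 ≤ 1/ε) (hy : dist y 1 ≤ 1/ε) (hxy : dist (x*y) 1 + ε ≤ 1/ε) :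
    dist (ς x * ς y) (ς (x*y)) ≤ 2*ε := by
  have hxy' : dist (x*y) 1 ≤ 1/ε := by linarith
  have hς : (ς (x*y)) ∈ Metric.closedBall (1 : H) (1/ε) := by
    rw [Metric.mem_closedBall]
    linarith [aii_norm hε ha hxy']
  have h2 := ha.2.2.1 x (Metric.mem_closedBall.2 hx) y (Metric.mem_closedBall.2 hy)
    (ς (x*y)) hς
  have h3 := aii_ret hε ha hxy
  have h2' := abs_le.1 h2
  linarith [h2'.2, dist_nonneg (x := ς x * ς y) (y := ς (x*y))]

theorem tendsto_of_abs_sub_le' {f g : ℕ → ℝ} {c : ℝ} {l : Filter ℕ}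
    (h : ∀ᶠ n in l, |f n - c| ≤ g n) (hg : Tendsto g l (𝓝 0)) : Tendsto f l (𝓝 c) := by
  rw [tendsto_iff_dist_tendsto_zero]
  refine squeeze_zero' (Eventually.of_forall fun n => dist_nonneg) ?_ hg
  simpa [Real.dist_eq] using h

theorem distMulOne_le (hinv : LeftInvariant G) (g g' : G) :
    dist (g * g') 1 ≤ dist g 1 + dist g' 1 := by
  calc dist (g * g') 1 ≤ dist (g * g') (g * 1) + dist (g * 1) 1 := dist_triangle _ _ _
    _ = dist g' 1 + dist g 1 := by rw [hinv, mul_one]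
    _ = dist g 1 + dist g' 1 := add_comm _ _

end Aux

theorem exists_isometric_iso_of_upsilon_eq_zero {G H : Type*}
    [Monoid G] [MetricSpace G] [ProperSpace G]
    [Monoid H] [MetricSpace H] [ProperSpace H]
    (hinvG : LeftInvariant G) (hinvH : LeftInvariant H)
    (hcontG : Continuous fun p : G × G => p.1 * p.2)
    (hcontH : Continuous fun p : H × H => p.1 * p.2)
    (h : Upsilon G H = 0) :
    ∃ ς : G ≃* H, Isometry ς := by
  classical
  unfold Upsilon at h
  set S : Set ℝ := {ε : ℝ | 0 < ε ∧ ∃ ς : G → H, ∃ κ : H → G, AlmostIsoIso ς κ ε (1 / ε)}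
    with hSdef
  -- `2 ∈ S`
  have h2S : (2:ℝ) ∈ S := by
    refine ⟨two_pos, fun _ => (1:H), fun _ => (1:G), rfl, rfl, ?_, ?_⟩
    · intro g hg g' hg' x hx
      rw [Metric.mem_closedBall] at hg hg' hx
      simp only [one_mul]
      have h1 := distMulOne_le hinvG g g'
      rw [dist_comm (1:H) x, abs_le]
      constructor <;>
        [linarith [dist_nonneg (x := x) (y := (1:H))];
         linarith [dist_nonneg (x := g*g') (y := (1:G))]]
    · intro g hg g' hg' x hx
      rw [Metric.mem_closedBall] at hg hg' hx
      simp only [one_mul]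
      have h1 := distMulOne_le hinvH g g'
      rw [dist_comm (1:G) x, abs_le]
      constructor <;>
        [linarith [dist_nonneg (x := x) (y := (1:G))];
         linarith [dist_nonneg (x := g*g') (y := (1:H))]]
  -- sInf S = 0
  have hS0 : sInf S = 0 := by
    have h1 : (0:ℝ) < Real.sqrt 2 / 2 := by positivity
    have h0 : 0 ≤ sInf S := Real.sInf_nonneg (fun x hx => hx.1.le)
    rcases eq_or_lt_of_le h0 with he | hl
    · exact he.symm
    · exact absurd h (lt_min h1 hl).ne'
  -- a sequence of better and better almost isomorphisms
  have hsmall : ∀ n : ℕ, ∃ e ∈ S, e < 1 / ((n : ℝ) + 1) := by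
    intro n
    by_contra hc
    push_neg at hc
    have h1 : 1 / ((n : ℝ) + 1) ≤ sInf S := le_csInf ⟨2, h2S⟩ hc
    rw [hS0] at h1
    have h2 : (0:ℝ) < 1 / ((n : ℝ) + 1) := by positivity
    linarith
  have hseq : ∀ n : ℕ, ∃ e : ℝ, ∃ f : G → H, ∃ k : H → G,
      0 < e ∧ e < 1 / ((n : ℝ) + 1) ∧ AlmostIsoIso f k e (1 / e) := by
    intro n
    obtain ⟨e, ⟨hep, f, k, hfk⟩, hel⟩ := hsmall n
    exact ⟨e, f, k, hep, hel, hfk⟩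
  choose ε ς κ hpos hlt haii using hseq
  have hsymm : ∀ n, AlmostIsoIso (κ n) (ς n) (ε n) (1/(ε n)) := fun n => aii_symm (haii n)
  have hε0 : Tendsto ε atTop (𝓝 0) :=
    squeeze_zero (fun n => (hpos n).le) (fun n => (hlt n).le)
      tendsto_one_div_add_atTop_nhds_zero_nat
  -- eventually `C + ε n ≤ 1 / ε n`
  have hbig : ∀ C : ℝ, ∀ᶠ n in atTop, C + ε n ≤ 1 / ε n := by
    intro C
    set M : ℝ := max C 0 + 1 with hM
    have hM1 : 1 ≤ M := by rw [hM]; linarith [le_max_right C 0]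
    have hev := hε0.eventually_lt_const (show (0:ℝ) < 1/(M+1) by
      exact div_pos one_pos (by linarith))
    filter_upwards [hev] with n hn
    have h1 : M + 1 < 1 / ε n := by
      have h2 := one_div_lt_one_div_of_lt (hpos n) hn
      rwa [one_div_one_div] at h2
    have h2 : ε n ≤ 1 := by
      have h3 : 1/(M+1) ≤ 1 := by rw [div_le_one (by linarith)]; linarith
      linarith
    have hC : C ≤ M - 1 := by rw [hM]; linarith [le_max_left C 0]
    linarith
  have hone : ∀ᶠ n in atTop, ε n ≤ 1 := by
    filter_upwards [hbig 0] with n hn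
    by_contra hc
    push_neg at hc
    have h1 : 1 / ε n < 1 := (div_lt_one (hpos n)).2 hc
    linarith
  -- the ultrafilter
  set U : Ultrafilter ℕ := Ultrafilter.of atTop with hUdef
  have hU : (U : Filter ℕ) ≤ atTop := Ultrafilter.of_le _
  have toU : ∀ {p : ℕ → Prop}, (∀ᶠ n in atTop, p n) → ∀ᶠ n in (U : Filter ℕ), p n :=
    fun hp => hp.filter_mono hU
  have hεU : Tendsto ε (U : Filter ℕ) (𝓝 0) := hε0.mono_left hU
  have h2ε : Tendsto (fun n => 2 * ε n) (U : Filter ℕ) (𝓝 0) := by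
    simpa using hεU.const_mul 2
  -- construction of the limit maps
  have hlimH : ∀ x : G, ∃ y : H, Tendsto (fun n => ς n x) (U : Filter ℕ) (𝓝 y) := by
    intro x
    have hbd : ∀ᶠ n in (U : Filter ℕ), ς n x ∈ Metric.closedBall (1 : H) (dist x 1 + 1) := by
      apply toU
      filter_upwards [hbig (dist x 1), hone] with n h1 h2
      rw [Metric.mem_closedBall]
      have hx : dist x 1 ≤ 1 / ε n := by linarith [hpos n]
      have h3 := aii_norm (hpos n) (haii n) hx
      linarith
    obtain ⟨y, -, hy⟩ := (isCompact_closedBall (1 : H) (dist x 1 + 1)).ultrafilter_le_nhds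
      (U.map fun n => ς n x)
      (by rwa [Ultrafilter.coe_map, Filter.le_principal_iff, Filter.mem_map])
    exact ⟨y, by rw [Ultrafilter.coe_map] at hy; exact hy⟩
  have hlimG : ∀ x : H, ∃ y : G, Tendsto (fun n => κ n x) (U : Filter ℕ) (𝓝 y) := by
    intro x
    have hbd : ∀ᶠ n in (U : Filter ℕ), κ n x ∈ Metric.closedBall (1 : G) (dist x 1 + 1) := by
      apply toU
      filter_upwards [hbig (dist x 1), hone] with n h1 h2
      rw [Metric.mem_closedBall]
      have hx : dist x 1 ≤ 1 / ε n := by linarith [hpos n]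
      have h3 := aii_norm (hpos n) (hsymm n) hx
      linarith
    obtain ⟨y, -, hy⟩ := (isCompact_closedBall (1 : G) (dist x 1 + 1)).ultrafilter_le_nhds
      (U.map fun n => κ n x)
      (by rwa [Ultrafilter.coe_map, Filter.le_principal_iff, Filter.mem_map])
    exact ⟨y, by rw [Ultrafilter.coe_map] at hy; exact hy⟩
  choose Φ hΦ using hlimH
  choose Ψ hΨ using hlimG
  -- Φ preserves distances
  have hdistG : ∀ x y : G, dist (Φ x) (Φ y) = dist x y := by
    intro x y
    refine tendsto_nhds_unique ((hΦ x).dist (hΦ y)) (tendsto_of_abs_sub_le' (toU ?_) h2ε)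
    filter_upwards [hbig (dist x 1), hbig (dist y 1)] with n h1 h2
    exact aii_dist (hpos n) (haii n) (by linarith [hpos n]) h2
  -- Φ is multiplicative
  have hmul : ∀ x y : G, Φ x * Φ y = Φ (x * y) := by
    intro x y
    have hm : Tendsto (fun n => ς n x * ς n y) (U : Filter ℕ) (𝓝 (Φ x * Φ y)) :=
      (hcontH.tendsto (Φ x, Φ y)).comp ((hΦ x).prodMk_nhds (hΦ y))
    have h0 : Tendsto (fun n => dist (ς n x * ς n y) (ς n (x*y))) (U : Filter ℕ) (𝓝 0) := by
      refine squeeze_zero' (Eventually.of_forall fun n => dist_nonneg) (toU ?_) h2ε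
      filter_upwards [hbig (dist x 1), hbig (dist y 1), hbig (dist (x*y) 1)] with n h1 h2 h3
      exact aii_mul (hpos n) (haii n) (by linarith [hpos n]) (by linarith [hpos n]) h3
    exact dist_eq_zero.1 (tendsto_nhds_unique (hm.dist (hΦ (x*y))) h0)
  -- Φ ∘ Ψ = id
  have hretH : ∀ x : H, Φ (Ψ x) = x := by
    intro x
    have h0 : Tendsto (fun n => dist (ς n (Ψ x)) x) (U : Filter ℕ) (𝓝 0) := by
      have hg : Tendsto (fun n => dist (Ψ x) (κ n x) + 3 * ε n) (U : Filter ℕ) (𝓝 0) := by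
        have h5 := ((tendsto_const_nhds (α := ℕ) (x := Ψ x)).dist (hΨ x)).add (hεU.const_mul 3)
        simpa using h5
      refine squeeze_zero' (Eventually.of_forall fun n => dist_nonneg) ?_ hg
      apply toU
      filter_upwards [hbig (dist x 1 + 1), hbig (dist (Ψ x) 1), hone] with n h1 h2 h3
      have hx1 : dist x 1 ≤ 1 / ε n := by linarith [hpos n]
      have hκ : dist (κ n x) 1 ≤ dist x 1 + ε n := aii_norm (hpos n) (hsymm n) hx1
      have hd : |dist (ς n (Ψ x)) (ς n (κ n x)) - dist (Ψ x) (κ n x)| ≤ 2 * ε n :=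
        aii_dist (hpos n) (haii n) (by linarith [hpos n]) (by linarith)
      have hr : dist x (ς n (κ n x)) ≤ ε n := aii_ret (hpos n) (hsymm n) (by linarith)
      have hd' := abs_le.1 hd
      calc dist (ς n (Ψ x)) x ≤ dist (ς n (Ψ x)) (ς n (κ n x)) + dist (ς n (κ n x)) x :=
            dist_triangle _ _ _
        _ ≤ (dist (Ψ x) (κ n x) + 2 * ε n) + ε n := by
            rw [dist_comm (ς n (κ n x)) x]; linarith [hd'.2]
        _ = dist (Ψ x) (κ n x) + 3 * ε n := by ring
    exact dist_eq_zero.1 (tendsto_nhds_unique ((hΦ (Ψ x)).dist tendsto_const_nhds) h0)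
  -- Ψ ∘ Φ = id
  have hretG : ∀ x : G, Ψ (Φ x) = x := by
    intro x
    have h0 : Tendsto (fun n => dist (κ n (Φ x)) x) (U : Filter ℕ) (𝓝 0) := by
      have hg : Tendsto (fun n => dist (Φ x) (ς n x) + 3 * ε n) (U : Filter ℕ) (𝓝 0) := by
        have h5 := ((tendsto_const_nhds (α := ℕ) (x := Φ x)).dist (hΦ x)).add (hεU.const_mul 3)
        simpa using h5
      refine squeeze_zero' (Eventually.of_forall fun n => dist_nonneg) ?_ hg
      apply toU
      filter_upwards [hbig (dist x 1 + 1), hbig (dist (Φ x) 1), hone] with n h1 h2 h3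
      have hx1 : dist x 1 ≤ 1 / ε n := by linarith [hpos n]
      have hς : dist (ς n x) 1 ≤ dist x 1 + ε n := aii_norm (hpos n) (haii n) hx1
      have hd : |dist (κ n (Φ x)) (κ n (ς n x)) - dist (Φ x) (ς n x)| ≤ 2 * ε n :=
        aii_dist (hpos n) (hsymm n) (by linarith [hpos n]) (by linarith)
      have hr : dist x (κ n (ς n x)) ≤ ε n := aii_ret (hpos n) (haii n) (by linarith)
      have hd' := abs_le.1 hd
      calc dist (κ n (Φ x)) x ≤ dist (κ n (Φ x)) (κ n (ς n x)) + dist (κ n (ς n x)) x :=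
            dist_triangle _ _ _
        _ ≤ (dist (Φ x) (ς n x) + 2 * ε n) + ε n := by
            rw [dist_comm (κ n (ς n x)) x]; linarith [hd'.2]
        _ = dist (Φ x) (ς n x) + 3 * ε n := by ring
    exact dist_eq_zero.1 (tendsto_nhds_unique ((hΨ (Φ x)).dist tendsto_const_nhds) h0)
  exact ⟨⟨⟨Φ, Ψ, hretG, hretH⟩, fun x y => (hmul x y).symm⟩, Isometry.of_dist_eq hdistG⟩
end

section
/- The Gromov-Hausdorff monoid distance Υ is a metric up to isometric monoid isomorphism on the class of proper metric monoids: it is symmetric, bounded above by √2/2, satisfies the triangle inequality, and vanishes precisely when the two proper metric monoids are isometrically isomorphic as monoids. -/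
open Filter Metric Topology

def upsilonSet (G H : Type*) [Monoid G] [MetricSpace G] [Monoid H] [MetricSpace H] : Set ℝ :=
  {ε : ℝ | 0 < ε ∧ ∃ ς : G → H, ∃ κ : H → G, AlmostIsoIso ς κ ε (1 / ε)}

lemma upsilon_eq (G H : Type*) [Monoid G] [MetricSpace G] [Monoid H] [MetricSpace H] :
    Upsilon G H = min (Real.sqrt 2 / 2) (sInf (upsilonSet G H)) :=
  rfl

lemma LeftInvariant.dist_mul_one_le {G : Type*} [Monoid G] [MetricSpace G]
    (hG : LeftInvariant G) (g g' : G) : dist (g * g') 1 ≤ dist g 1 + dist g' 1 :=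
  calc dist (g * g') 1 ≤ dist (g * g') (g * 1) + dist (g * 1) 1 := dist_triangle _ _ _
    _ = dist g 1 + dist g' 1 := by rw [hG, mul_one, add_comm]

namespace AlmostIsoIso

variable {G H K : Type*} [Monoid G] [MetricSpace G] [Monoid H] [MetricSpace H]
  [Monoid K] [MetricSpace K] {ς : G → H} {κ : H → G} {ε r : ℝ}

lemma symm (hA : AlmostIsoIso ς κ ε r) : AlmostIsoIso κ ς ε r :=
  ⟨hA.2.1, hA.1, hA.2.2.2, hA.2.2.1⟩

lemma abs_dist_sub_dist_le (hA : AlmostIsoIso ς κ ε r) {g : G} {h : H}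
    (hg : g ∈ closedBall 1 r) (hh : h ∈ closedBall 1 r) :
    |dist (ς g) h - dist g (κ h)| ≤ ε := by
  simpa [hA.1] using hA.2.2.1 g hg 1 (mem_closedBall_self (dist_nonneg.trans hg)) h hh

lemma abs_dist_one_sub_le (hA : AlmostIsoIso ς κ ε r) {g : G} (hg : g ∈ closedBall 1 r) :
    |dist (ς g) 1 - dist g 1| ≤ ε := by
  simpa [hA.2.1] using hA.abs_dist_sub_dist_le hg (mem_closedBall_self (dist_nonneg.trans hg))

lemma mapsTo_closedBall (hA : AlmostIsoIso ς κ ε r) {s : ℝ} (hs : s ≤ r) :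
    Set.MapsTo ς (closedBall 1 s) (closedBall 1 (s + ε)) := fun g hg => by
  have := (abs_le.1 (hA.abs_dist_one_sub_le (closedBall_subset_closedBall hs hg))).2
  rw [mem_closedBall] at hg ⊢
  linarith

lemma dist_apply_apply_le (hA : AlmostIsoIso ς κ ε r) {g : G} (hg : g ∈ closedBall 1 r)
    (hςg : ς g ∈ closedBall 1 r) : dist (κ (ς g)) g ≤ ε := by
  simpa using hA.symm.abs_dist_sub_dist_le hςg hg

lemma abs_dist_apply_sub_dist_le (hA : AlmostIsoIso ς κ ε r) {g g' : G}
    (hg : g ∈ closedBall 1 r) (hg' : g' ∈ closedBall 1 r) (hςg' : ς g' ∈ closedBall 1 r) :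
    |dist (ς g) (ς g') - dist g g'| ≤ 2 * ε :=
  calc |dist (ς g) (ς g') - dist g g'|
      ≤ |dist (ς g) (ς g') - dist g (κ (ς g'))| + |dist g (κ (ς g')) - dist g g'| :=
        abs_sub_le _ _ _
    _ ≤ ε + dist (κ (ς g')) g' :=
        add_le_add (hA.abs_dist_sub_dist_le hg hςg')
          (by simpa only [dist_comm g] using abs_dist_sub_le (κ (ς g')) g' g)
    _ ≤ 2 * ε := by linarith [hA.dist_apply_apply_le hg' hςg']

lemma dist_apply_mul_le (hA : AlmostIsoIso ς κ ε r) {g g' : G} (hg : g ∈ closedBall 1 r)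
    (hg' : g' ∈ closedBall 1 r) (hgg' : g * g' ∈ closedBall 1 r)
    (hςgg' : ς (g * g') ∈ closedBall 1 r) : dist (ς (g * g')) (ς g * ς g') ≤ 2 * ε := by
  have h₁ := (abs_le.1 (hA.2.2.1 g hg g' hg' (ς (g * g')) hςgg')).2
  have h₂ := hA.dist_apply_apply_le hgg' hςgg'
  rw [dist_comm] at h₁ h₂
  linarith

section Comp

variable {ς₁ : G → H} {κ₁ : H → G} {ς₂ : H → K} {κ₂ : K → H} {ε₁ ε₂ r₁ r₂ : ℝ}

lemma abs_dist_comp_mul_sub_le (hA₁ : AlmostIsoIso ς₁ κ₁ ε₁ r₁) (hA₂ : AlmostIsoIso ς₂ κ₂ ε₂ r₂)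
    (h₁ : r + ε₂ ≤ r₁) (h₂ : r + ε₁ ≤ r₂) (hε₁ : 0 ≤ ε₁) (hε₂ : 0 ≤ ε₂)
    {g g' : G} (hg : g ∈ closedBall 1 r) (hg' : g' ∈ closedBall 1 r) {h : K}
    (hh : h ∈ closedBall 1 r) :
    |dist (ς₂ (ς₁ g) * ς₂ (ς₁ g')) h - dist (g * g') (κ₁ (κ₂ h))| ≤ ε₁ + ε₂ := by
  have hr₁ : closedBall (1 : G) r ⊆ closedBall 1 r₁ := closedBall_subset_closedBall (by linarith)
  have hr₂ : closedBall (1 : K) r ⊆ closedBall 1 r₂ := closedBall_subset_closedBall (by linarith)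
  have hς₁ : Set.MapsTo ς₁ (closedBall 1 r) (closedBall 1 r₂) := fun x hx =>
    closedBall_subset_closedBall h₂ (hA₁.mapsTo_closedBall (by linarith) hx)
  have hκ₂ : κ₂ h ∈ closedBall 1 r₁ :=
    closedBall_subset_closedBall h₁ (hA₂.symm.mapsTo_closedBall (by linarith) hh)
  calc |dist (ς₂ (ς₁ g) * ς₂ (ς₁ g')) h - dist (g * g') (κ₁ (κ₂ h))|
      ≤ |dist (ς₂ (ς₁ g) * ς₂ (ς₁ g')) h - dist (ς₁ g * ς₁ g') (κ₂ h)|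
        + |dist (ς₁ g * ς₁ g') (κ₂ h) - dist (g * g') (κ₁ (κ₂ h))| := abs_sub_le _ _ _
    _ ≤ ε₂ + ε₁ :=
        add_le_add (hA₂.2.2.1 _ (hς₁ hg) _ (hς₁ hg') h (hr₂ hh))
          (hA₁.2.2.1 g (hr₁ hg) g' (hr₁ hg') _ hκ₂)
    _ = ε₁ + ε₂ := add_comm _ _

lemma comp (hA₁ : AlmostIsoIso ς₁ κ₁ ε₁ r₁) (hA₂ : AlmostIsoIso ς₂ κ₂ ε₂ r₂)
    (h₁ : r + ε₂ ≤ r₁) (h₂ : r + ε₁ ≤ r₂) (hε₁ : 0 ≤ ε₁) (hε₂ : 0 ≤ ε₂) :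
    AlmostIsoIso (ς₂ ∘ ς₁) (κ₁ ∘ κ₂) (ε₁ + ε₂) r :=
  ⟨by simp [hA₁.1, hA₂.1], by simp [hA₁.2.1, hA₂.2.1],
    fun _ hg _ hg' _ hh => abs_dist_comp_mul_sub_le hA₁ hA₂ h₁ h₂ hε₁ hε₂ hg hg' hh,
    fun _ hg _ hg' _ hh => add_comm ε₂ ε₁ ▸
      abs_dist_comp_mul_sub_le hA₂.symm hA₁.symm h₂ h₁ hε₂ hε₁ hg hg' hh⟩

end Comp

lemma of_isometry (e : G ≃* H) (he : Isometry e) (hε : 0 ≤ ε) : AlmostIsoIso e e.symm ε r := by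
  refine ⟨map_one e, map_one e.symm, fun g _ g' _ h _ => ?_, fun g _ g' _ h _ => ?_⟩
  · rw [← map_mul, ← he.dist_eq (g * g') (e.symm h), e.apply_symm_apply, sub_self, abs_zero]
    exact hε
  · rw [← map_mul, ← he.dist_eq, e.apply_symm_apply, sub_self, abs_zero]
    exact hε

lemma abs_dist_one_mul_sub_le (hG : LeftInvariant G) {g g' : G} {h : H}
    (hg : g ∈ closedBall 1 r) (hg' : g' ∈ closedBall 1 r) (hh : h ∈ closedBall 1 r)
    (hε : 2 * r ≤ ε) : |dist ((1 : H) * 1) h - dist (g * g') 1| ≤ ε := by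
  rw [mem_closedBall] at hg hg' hh
  have hr : 0 ≤ r := dist_nonneg.trans hg
  rw [one_mul, dist_comm]
  exact abs_sub_le_of_nonneg_of_le dist_nonneg (by linarith) dist_nonneg
    (by linarith [hG.dist_mul_one_le g g'])

lemma const_one (hG : LeftInvariant G) (hH : LeftInvariant H) (hε : 2 * r ≤ ε) :
    AlmostIsoIso (fun _ : G => (1 : H)) (fun _ : H => (1 : G)) ε r :=
  ⟨rfl, rfl, fun _ hg _ hg' _ hh => abs_dist_one_mul_sub_le hG hg hg' hh hε,
    fun _ hg _ hg' _ hh => abs_dist_one_mul_sub_le hH hg hg' hh hε⟩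

end AlmostIsoIso

section Upsilon

variable {G₁ G₂ G₃ : Type*} [Monoid G₁] [MetricSpace G₁] [Monoid G₂] [MetricSpace G₂]
  [Monoid G₃] [MetricSpace G₃]

lemma upsilonSet_comm : upsilonSet G₁ G₂ = upsilonSet G₂ G₁ := by
  ext ε
  constructor <;> rintro ⟨hε, ς, κ, hA⟩ <;> exact ⟨hε, κ, ς, hA.symm⟩

lemma upsilon_comm : Upsilon G₁ G₂ = Upsilon G₂ G₁ := by
  rw [upsilon_eq, upsilon_eq, upsilonSet_comm]

lemma upsilonSet_bddBelow : BddBelow (upsilonSet G₁ G₂) :=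
  ⟨0, fun _ hε => hε.1.le⟩

lemma sInf_upsilonSet_nonneg : 0 ≤ sInf (upsilonSet G₁ G₂) :=
  Real.sInf_nonneg fun _ hε => hε.1.le

lemma upsilonSet_nonempty (h₁ : LeftInvariant G₁) (h₂ : LeftInvariant G₂) :
    (upsilonSet G₁ G₂).Nonempty :=
  ⟨2, two_pos, _, _, AlmostIsoIso.const_one h₁ h₂ (by norm_num)⟩

lemma one_div_add_add_le_one_div {a b : ℝ} (ha : 0 < a) (hb : 0 < b) (hab : a + b ≤ 1) :
    1 / (a + b) + b ≤ 1 / a := by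
  rw [div_add' _ _ _ (by positivity), div_le_div_iff₀ (by positivity) ha]
  nlinarith [mul_pos ha hb, mul_le_mul_of_nonneg_right hab hb.le]

lemma add_mem_upsilonSet {a b : ℝ} (ha : a ∈ upsilonSet G₁ G₂) (hb : b ∈ upsilonSet G₂ G₃)
    (hab : a + b ≤ 1) : a + b ∈ upsilonSet G₁ G₃ := by
  obtain ⟨ha, ς₁, κ₁, hA₁⟩ := ha
  obtain ⟨hb, ς₂, κ₂, hA₂⟩ := hb
  refine ⟨add_pos ha hb, _, _, hA₁.comp hA₂ (one_div_add_add_le_one_div ha hb hab) ?_ ha.le hb.le⟩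
  rw [add_comm a b] at hab ⊢
  exact one_div_add_add_le_one_div hb ha hab

lemma sqrt_two_div_two_le_one : Real.sqrt 2 / 2 ≤ 1 := by
  rw [div_le_one two_pos, Real.sqrt_le_iff]
  norm_num

lemma upsilon_le_add_of_mem {a b : ℝ} (ha : a ∈ upsilonSet G₁ G₂) (hb : b ∈ upsilonSet G₂ G₃) :
    Upsilon G₁ G₃ ≤ a + b := by
  by_cases hab : a + b ≤ 1
  · exact (min_le_right _ _).trans (csInf_le upsilonSet_bddBelow (add_mem_upsilonSet ha hb hab))
  · exact (min_le_left _ _).trans (sqrt_two_div_two_le_one.trans (not_le.1 hab).le)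

lemma upsilon_triangle (h₁ : LeftInvariant G₁) (h₂ : LeftInvariant G₂) (h₃ : LeftInvariant G₃) :
    Upsilon G₁ G₃ ≤ Upsilon G₁ G₂ + Upsilon G₂ G₃ := by
  have hS₁₂ := upsilonSet_nonempty h₁ h₂
  have hS₂₃ := upsilonSet_nonempty h₂ h₃
  have hsInf : Upsilon G₁ G₃ ≤ sInf (upsilonSet G₁ G₂) + sInf (upsilonSet G₂ G₃) := by
    rw [← csInf_add hS₁₂ upsilonSet_bddBelow hS₂₃ upsilonSet_bddBelow]
    refine le_csInf (hS₁₂.add hS₂₃) ?_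
    rintro _ ⟨a, ha, b, hb, rfl⟩
    exact upsilon_le_add_of_mem ha hb
  have h₁₃ : Upsilon G₁ G₃ ≤ Real.sqrt 2 / 2 := min_le_left _ _
  have : 0 ≤ Real.sqrt 2 / 2 := by positivity
  have h₁₂ : 0 ≤ sInf (upsilonSet G₁ G₂) := sInf_upsilonSet_nonneg
  have h₂₃ : 0 ≤ sInf (upsilonSet G₂ G₃) := sInf_upsilonSet_nonneg
  rw [upsilon_eq G₁ G₂, upsilon_eq G₂ G₃, min_def, min_def]
  split_ifs <;> linarith

lemma upsilon_eq_zero_iff_sInf_eq_zero :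
    Upsilon G₁ G₂ = 0 ↔ sInf (upsilonSet G₁ G₂) = 0 := by
  have : 0 < Real.sqrt 2 / 2 := by positivity
  have : 0 ≤ sInf (upsilonSet G₁ G₂) := sInf_upsilonSet_nonneg
  rw [upsilon_eq, min_def]
  split_ifs <;> constructor <;> intro <;> linarith

lemma upsilonSet_eq_Ioi_of_isometry (e : G₁ ≃* G₂) (he : Isometry e) :
    upsilonSet G₁ G₂ = Set.Ioi 0 :=
  Set.Subset.antisymm (fun _ hε => hε.1)
    fun _ hε => ⟨hε, e, e.symm, AlmostIsoIso.of_isometry e he (le_of_lt hε)⟩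

end Upsilon

lemma eq_of_tendsto_of_dist_le {α ι : Type*} [MetricSpace α] {l : Filter ι} [l.NeBot]
    {u v : ι → α} {δ : ι → ℝ} {a b : α} (hu : Tendsto u l (𝓝 a)) (hv : Tendsto v l (𝓝 b))
    (hδ : Tendsto δ l (𝓝 0)) (h : ∀ᶠ i in l, dist (u i) (v i) ≤ δ i) : a = b :=
  dist_le_zero.1 (le_of_tendsto_of_tendsto (hu.dist hv) hδ h)

lemma exists_tendsto_of_eventually_mem_closedBall {α ι : Type*} [MetricSpace α] [ProperSpace α]
    (U : Ultrafilter ι) {u : ι → α} {c : α} {R : ℝ} (h : ∀ᶠ i in U, u i ∈ closedBall c R) :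
    ∃ a, Tendsto u U (𝓝 a) :=
  let ⟨a, _, ha⟩ := (isCompact_closedBall c R).ultrafilter_le_nhds (U.map u)
    (by rwa [Ultrafilter.coe_map, le_principal_iff])
  ⟨a, ha⟩

namespace AlmostIsoIso

variable {G H ι : Type*} [Monoid G] [MetricSpace G] [Monoid H] [MetricSpace H]
  {l : Filter ι} {ε r : ι → ℝ} {ς : ι → G → H} {κ : ι → H → G}

lemma eventually_apply_mem_closedBall (hA : ∀ i, AlmostIsoIso (ς i) (κ i) (ε i) (r i))
    (hε : Tendsto ε l (𝓝 0)) (hr : Tendsto r l atTop) (g : G) :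
    ∀ᶠ i in l, ς i g ∈ closedBall 1 (dist g 1 + 1) := by
  filter_upwards [hr.eventually_ge_atTop (dist g 1), hε.eventually_le_const one_pos] with i hri hεi
  exact closedBall_subset_closedBall (by linarith)
    ((hA i).mapsTo_closedBall hri (mem_closedBall.2 le_rfl))

lemma eventually_apply_mem_closedBall_radius (hA : ∀ i, AlmostIsoIso (ς i) (κ i) (ε i) (r i))
    (hε : Tendsto ε l (𝓝 0)) (hr : Tendsto r l atTop) (g : G) :
    ∀ᶠ i in l, ς i g ∈ closedBall 1 (r i) := by
  filter_upwards [eventually_apply_mem_closedBall hA hε hr g,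
    hr.eventually_ge_atTop (dist g 1 + 1)] with i hi hri
  exact closedBall_subset_closedBall hri hi

lemma exists_tendsto_apply [ProperSpace H] (U : Ultrafilter ι)
    (hA : ∀ i, AlmostIsoIso (ς i) (κ i) (ε i) (r i)) (hε : Tendsto ε U (𝓝 0))
    (hr : Tendsto r U atTop) (g : G) : ∃ a, Tendsto (fun i => ς i g) U (𝓝 a) :=
  exists_tendsto_of_eventually_mem_closedBall U (eventually_apply_mem_closedBall hA hε hr g)

variable [l.NeBot] {Φ : G → H} {Ψ : H → G}

lemma dist_eq_of_tendsto (hA : ∀ i, AlmostIsoIso (ς i) (κ i) (ε i) (r i))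
    (hε : Tendsto ε l (𝓝 0)) (hr : Tendsto r l atTop)
    (hΦ : ∀ g, Tendsto (fun i => ς i g) l (𝓝 (Φ g))) (g g' : G) :
    dist (Φ g) (Φ g') = dist g g' := by
  refine eq_of_tendsto_of_dist_le ((hΦ g).dist (hΦ g')) tendsto_const_nhds
    (by simpa using hε.const_mul 2) ?_
  filter_upwards [hr.eventually_ge_atTop (dist g 1), hr.eventually_ge_atTop (dist g' 1),
    eventually_apply_mem_closedBall_radius hA hε hr g'] with i hg hg' hςg'
  exact (hA i).abs_dist_apply_sub_dist_le hg hg' hςg'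

lemma map_mul_of_tendsto (hcont : Continuous fun p : H × H => p.1 * p.2)
    (hA : ∀ i, AlmostIsoIso (ς i) (κ i) (ε i) (r i))
    (hε : Tendsto ε l (𝓝 0)) (hr : Tendsto r l atTop)
    (hΦ : ∀ g, Tendsto (fun i => ς i g) l (𝓝 (Φ g))) (g g' : G) :
    Φ (g * g') = Φ g * Φ g' := by
  refine eq_of_tendsto_of_dist_le (hΦ (g * g'))
    ((hcont.tendsto _).comp ((hΦ g).prodMk_nhds (hΦ g'))) (by simpa using hε.const_mul 2) ?_
  filter_upwards [hr.eventually_ge_atTop (dist g 1), hr.eventually_ge_atTop (dist g' 1),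
    hr.eventually_ge_atTop (dist (g * g') 1),
    eventually_apply_mem_closedBall_radius hA hε hr (g * g')] with i hg hg' hgg' hςgg'
  exact (hA i).dist_apply_mul_le hg hg' hgg' hςgg'

lemma leftInverse_of_tendsto (hA : ∀ i, AlmostIsoIso (ς i) (κ i) (ε i) (r i))
    (hε : Tendsto ε l (𝓝 0)) (hr : Tendsto r l atTop)
    (hΦ : ∀ g, Tendsto (fun i => ς i g) l (𝓝 (Φ g)))
    (hΨ : ∀ h, Tendsto (fun i => κ i h) l (𝓝 (Ψ h))) : Function.LeftInverse Ψ Φ := by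
  intro g
  refine eq_of_tendsto_of_dist_le (δ := fun i => dist (Φ g) (ς i g) + ε i) (hΨ (Φ g))
    tendsto_const_nhds (by simpa using (tendsto_const_nhds (x := Φ g)).dist (hΦ g) |>.add hε) ?_
  filter_upwards [hr.eventually_ge_atTop (dist (Φ g) 1), hr.eventually_ge_atTop (dist g 1)]
    with i hΦg hg
  linarith [(abs_le.1 ((hA i).symm.abs_dist_sub_dist_le hΦg hg)).2]

end AlmostIsoIso

open AlmostIsoIso in
theorem exists_mulEquiv_isometry_of_tendsto {G H ι : Type*} [Monoid G] [MetricSpace G]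
    [ProperSpace G] [Monoid H] [MetricSpace H] [ProperSpace H]
    (hcont : Continuous fun p : H × H => p.1 * p.2) {l : Filter ι} [l.NeBot] {ε r : ι → ℝ}
    {ς : ι → G → H} {κ : ι → H → G} (hA : ∀ i, AlmostIsoIso (ς i) (κ i) (ε i) (r i))
    (hε : Tendsto ε l (𝓝 0)) (hr : Tendsto r l atTop) : ∃ e : G ≃* H, Isometry e := by
  have hU : (Ultrafilter.of l : Filter ι) ≤ l := Ultrafilter.of_le l
  replace hε := hε.mono_left hU
  replace hr := hr.mono_left hU
  have hA' := fun i => (hA i).symm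
  choose Φ hΦ using exists_tendsto_apply _ hA hε hr
  choose Ψ hΨ using exists_tendsto_apply _ hA' hε hr
  exact ⟨{ toFun := Φ, invFun := Ψ
           left_inv := leftInverse_of_tendsto hA hε hr hΦ hΨ
           right_inv := leftInverse_of_tendsto hA' hε hr hΨ hΦ
           map_mul' := map_mul_of_tendsto hcont hA hε hr hΦ },
    Isometry.of_dist_eq (dist_eq_of_tendsto hA hε hr hΦ)⟩

theorem upsilon_eq_zero_iff {G H : Type*} [Monoid G] [MetricSpace G] [ProperSpace G]
    [Monoid H] [MetricSpace H] [ProperSpace H] (hG : LeftInvariant G) (hH : LeftInvariant H)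
    (hcont : Continuous fun p : H × H => p.1 * p.2) :
    Upsilon G H = 0 ↔ ∃ e : G ≃* H, Isometry e := by
  rw [upsilon_eq_zero_iff_sInf_eq_zero]
  constructor
  · intro h0
    obtain ⟨ε, -, hε, hmem⟩ :=
      exists_seq_tendsto_sInf (upsilonSet_nonempty hG hH) upsilonSet_bddBelow
    rw [h0] at hε
    choose hpos ς κ hA using hmem
    have hr : Tendsto (fun n => 1 / ε n) atTop atTop := by
      simpa only [one_div, Pi.inv_def] using
        (tendsto_nhdsWithin_iff.2 ⟨hε, Eventually.of_forall hpos⟩).inv_tendsto_nhdsGT_zero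
    exact exists_mulEquiv_isometry_of_tendsto hcont hA hε hr
  · rintro ⟨e, he⟩
    rw [upsilonSet_eq_Ioi_of_isometry e he, csInf_Ioi]

theorem upsilon_metric_general {G₁ G₂ G₃ : Type*}
    [Monoid G₁] [MetricSpace G₁] [ProperSpace G₁]
    [Monoid G₂] [MetricSpace G₂] [ProperSpace G₂]
    [Monoid G₃] [MetricSpace G₃]
    (hinv₁ : LeftInvariant G₁) (hinv₂ : LeftInvariant G₂) (hinv₃ : LeftInvariant G₃)
    (hcont₂ : Continuous fun p : G₂ × G₂ => p.1 * p.2) :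
    Upsilon G₁ G₂ ≤ Real.sqrt 2 / 2 ∧
    Upsilon G₁ G₂ = Upsilon G₂ G₁ ∧
    Upsilon G₁ G₃ ≤ Upsilon G₁ G₂ + Upsilon G₂ G₃ ∧
    (Upsilon G₁ G₂ = 0 ↔ ∃ ς : G₁ ≃* G₂, Isometry ς) :=
  ⟨min_le_left _ _, upsilon_comm, upsilon_triangle hinv₁ hinv₂ hinv₃,
    upsilon_eq_zero_iff hinv₁ hinv₂ hcont₂⟩

theorem upsilon_metric {G₁ G₂ G₃ : Type*}
    [Monoid G₁] [MetricSpace G₁] [ProperSpace G₁]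
    [Monoid G₂] [MetricSpace G₂] [ProperSpace G₂]
    [Monoid G₃] [MetricSpace G₃] [ProperSpace G₃]
    (hinv₁ : LeftInvariant G₁) (hinv₂ : LeftInvariant G₂) (hinv₃ : LeftInvariant G₃)
    (hcont₁ : Continuous fun p : G₁ × G₁ => p.1 * p.2)
    (hcont₂ : Continuous fun p : G₂ × G₂ => p.1 * p.2)
    (hcont₃ : Continuous fun p : G₃ × G₃ => p.1 * p.2) :
    Upsilon G₁ G₂ ≤ Real.sqrt 2 / 2 ∧
    Upsilon G₁ G₂ = Upsilon G₂ G₁ ∧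
    Upsilon G₁ G₃ ≤ Upsilon G₁ G₂ + Upsilon G₂ G₃ ∧
    (Upsilon G₁ G₂ = 0 ↔ ∃ ς : G₁ ≃* G₂, Isometry ς) :=
  upsilon_metric_general hinv₁ hinv₂ hinv₃ hcont₂
end
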